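/- arXiv:2005.06158 — 3 statements merged into one kernel-verified Lean document; each statement's English description precedes it below -/
import Mathlib

section
/- Let f_R = ∑_{r_1,...,r_K ∈ {0,...,R}, ∑ r_k = RT} ∏_{k=1}^K C(R, r_k) exp(∑_k r_k a_k), where 0 < T < K is an integer. Then lim_{R→∞} (1/R) log f_R = −τT + ∑_{k=1}^K log(1 + exp(a_k + τ)), where τ is the unique real solution of ∑_{k=1}^K exp(a_k + τ)/(1 + exp(a_k + τ)) = T. -/
/-!
Upper bound (Chernoff): on the constraint `∑ r = RT`, shifting every `a k` by `τ` multiplies each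
term by `exp (τ R T)`; dropping the constraint, the sum becomes `∏ (1 + exp (a k + τ)) ^ R`.

Lower bound: keep one term. Round `R p` with `p k = exp (a k + τ) / (1 + exp (a k + τ))` to a
nonnegative integer vector `r` with the right sum (the defining equation of `τ` says `∑ p = T`),
and use `log (R choose r) ≥ R H(r / R) - log (R + 1)`, where `H` is the binary entropy; this
holds because the `r`-th term of the expansion of `(r + (R - r)) ^ R` is its largest. As
`r / R → p`, the lower bound tends to `∑ (H (p k) + p k a k)`, which is the claimed limit since
`H (σ b) + σ b b = log (1 + exp b)` for the logistic function `σ`.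
-/

open Finset Filter Real Topology

theorem Nat.apply_le_apply_of_le_succ_of_succ_le {α : Type*} [Preorder α] {f : ℕ → α} {k : ℕ}
    (hup : ∀ i < k, f i ≤ f (i + 1)) (hdown : ∀ i ≥ k, f (i + 1) ≤ f i) (j : ℕ) :
    f j ≤ f k := by
  rcases le_total j k with hjk | hkj
  · exact monotoneOn_of_le_add_one Set.ordConnected_Iic (fun i _ _ hi => hup i hi)
      hjk (Set.mem_Iic.2 le_rfl) hjk
  · exact antitoneOn_nat_Ici_of_succ_le hdown (le_refl k) hkj hkj

namespace Nat

theorem choose_succ_mul_pow_mul_pow_mul {n k j : ℕ} (hj : j < n) :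
    n.choose (j + 1) * k ^ (j + 1) * (n - k) ^ (n - (j + 1)) * ((j + 1) * (n - k)) =
      n.choose j * k ^ j * (n - k) ^ (n - j) * ((n - j) * k) := by
  have hpow : (n - k) ^ (n - (j + 1)) * (n - k) = (n - k) ^ (n - j) := by
    rw [← pow_succ]; congr 1; omega
  calc n.choose (j + 1) * k ^ (j + 1) * (n - k) ^ (n - (j + 1)) * ((j + 1) * (n - k))
      = n.choose (j + 1) * (j + 1) * (k ^ j * k) * ((n - k) ^ (n - (j + 1)) * (n - k)) := by
        ring
    _ = n.choose j * (n - j) * (k ^ j * k) * (n - k) ^ (n - j) := by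
        rw [choose_succ_right_eq, hpow]
    _ = n.choose j * k ^ j * (n - k) ^ (n - j) * ((n - j) * k) := by ring

theorem choose_mul_pow_mul_pow_le {n k : ℕ} (hk : k < n) (j : ℕ) :
    n.choose j * k ^ j * (n - k) ^ (n - j) ≤ n.choose k * k ^ k * (n - k) ^ (n - k) := by
  have hpos : ∀ i, 0 < (i + 1) * (n - k) := fun i => Nat.mul_pos i.succ_pos (by omega)
  apply Nat.apply_le_apply_of_le_succ_of_succ_le
    (f := fun i => n.choose i * k ^ i * (n - k) ^ (n - i))
  · intro i hi
    refine Nat.le_of_mul_le_mul_right ?_ (hpos i)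
    rw [choose_succ_mul_pow_mul_pow_mul (hi.trans hk)]
    refine Nat.mul_le_mul_left _ ?_
    rw [mul_comm (n - i)]
    exact Nat.mul_le_mul (by omega) (by omega)
  · intro i hi
    rcases lt_or_ge i n with hin | hni
    · refine Nat.le_of_mul_le_mul_right ?_ (hpos i)
      rw [choose_succ_mul_pow_mul_pow_mul hin]
      refine Nat.mul_le_mul_left _ ?_
      rw [mul_comm (i + 1)]
      exact Nat.mul_le_mul (by omega) (by omega)
    · simp [choose_eq_zero_of_lt (show n < i + 1 by omega)]

theorem pow_self_le_succ_mul_choose_mul_pow_mul_pow {n k : ℕ} (hk : k < n) :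
    n ^ n ≤ (n + 1) * (n.choose k * k ^ k * (n - k) ^ (n - k)) := by
  calc n ^ n = (k + (n - k)) ^ n := by rw [Nat.add_sub_cancel' hk.le]
    _ = ∑ j ∈ range (n + 1), n.choose j * k ^ j * (n - k) ^ (n - j) := by
        rw [add_pow]; exact sum_congr rfl fun j _ => by rw [Nat.cast_id]; ring
    _ ≤ ∑ _j ∈ range (n + 1), n.choose k * k ^ k * (n - k) ^ (n - k) :=
        sum_le_sum fun j _ => choose_mul_pow_mul_pow_le hk j
    _ = (n + 1) * (n.choose k * k ^ k * (n - k) ^ (n - k)) := by simp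

end Nat

theorem Real.mul_binEntropy_div_eq {n k : ℝ} (hk : 0 < k) (hkn : k < n) :
    n * binEntropy (k / n) = n * log n - k * log k - (n - k) * log (n - k) := by
  have hn : 0 < n := hk.trans hkn
  have hnk : 0 < n - k := sub_pos.2 hkn
  rw [binEntropy, inv_div, one_sub_div hn.ne', inv_div, log_div hn.ne' hk.ne',
    log_div hn.ne' hnk.ne']
  field_simp
  ring

theorem Real.mul_binEntropy_sub_log_le_log_choose {n k : ℕ} (hkn : k ≤ n) :
    n * binEntropy (k / n) - log (n + 1) ≤ log (n.choose k) := by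
  have hlog : 0 ≤ log ((n : ℝ) + 1) := log_nonneg (by linarith [n.cast_nonneg (α := ℝ)])
  rcases Nat.eq_zero_or_pos k with rfl | hk
  · simpa using hlog
  rcases hkn.eq_or_lt with rfl | hkn
  · have : (k : ℝ) ≠ 0 := by exact_mod_cast hk.ne'
    simpa [this] using hlog
  have hk' : (0 : ℝ) < k := by exact_mod_cast hk
  have hkn' : (k : ℝ) < n := by exact_mod_cast hkn
  have hnk : (0 : ℝ) < n - k := sub_pos.2 hkn'
  have hchoose : (0 : ℝ) < n.choose k := by exact_mod_cast Nat.choose_pos hkn.le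
  have hpow : (n : ℝ) ^ n ≤ (n + 1) * (n.choose k * (k : ℝ) ^ k * ((n : ℝ) - k) ^ (n - k)) := by
    have := Nat.pow_self_le_succ_mul_choose_mul_pow_mul_pow hkn
    rw [← Nat.cast_sub hkn.le]
    exact_mod_cast this
  have := log_le_log (pow_pos (hk'.trans hkn') n) hpow
  rw [log_pow, log_mul (by positivity) (by positivity), log_mul (by positivity) (by positivity),
    log_mul (by positivity) (by positivity), log_pow, log_pow, Nat.cast_sub hkn.le] at this
  rw [mul_binEntropy_div_eq hk' hkn']
  linarith

theorem Real.exp_div_one_add_exp (b : ℝ) : exp b / (1 + exp b) = sigmoid b := by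
  rw [sigmoid_def, exp_neg]
  field_simp
  ring

theorem Real.binEntropy_sigmoid_add_sigmoid_mul (b : ℝ) :
    binEntropy (sigmoid b) + sigmoid b * b = log (1 + exp b) := by
  have hpos : 0 < 1 + exp b := by positivity
  have hinv : (sigmoid b)⁻¹ = exp (-b) * (1 + exp b) := by
    rw [sigmoid_def, inv_inv, mul_add, mul_one, ← exp_add, neg_add_cancel, exp_zero, add_comm]
  have hinv' : (1 - sigmoid b)⁻¹ = 1 + exp b := by
    rw [← exp_div_one_add_exp]; field_simp; ring
  rw [binEntropy, hinv, hinv', log_mul (exp_pos _).ne' hpos.ne', log_exp]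
  ring

theorem exists_nat_sum_eq_floor_sum_and_abs_sub_lt_one :
    ∀ {n : ℕ} (x : Fin n → ℝ), (∀ i, 0 ≤ x i) →
      ∃ r : Fin n → ℕ, ∑ i, r i = ⌊∑ i, x i⌋₊ ∧ ∀ i, |(r i : ℝ) - x i| < 1
  | 0, _, _ => ⟨0, by simp, fun i => i.elim0⟩
  | n + 1, x, hx => by
    obtain ⟨r, hr_sum, hr_close⟩ :=
      exists_nat_sum_eq_floor_sum_and_abs_sub_lt_one (fun i => x i.castSucc) fun i => hx _
    set s := ∑ i : Fin n, x i.castSucc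
    have hs : 0 ≤ s := sum_nonneg fun i _ => hx _
    have hmono : ⌊s⌋₊ ≤ ⌊s + x (Fin.last n)⌋₊ := Nat.floor_le_floor (by linarith [hx (Fin.last n)])
    refine ⟨Fin.snoc (α := fun _ => ℕ) r (⌊s + x (Fin.last n)⌋₊ - ⌊s⌋₊), ?_, ?_⟩
    · simp only [Fin.sum_univ_castSucc, Fin.snoc_castSucc, Fin.snoc_last, hr_sum]
      exact Nat.add_sub_cancel' hmono
    · refine Fin.lastCases ?_ (fun i => by simpa using hr_close i)
      rw [Fin.snoc_last, Nat.cast_sub hmono, abs_lt]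
      have h₁ := Nat.floor_le hs
      have h₂ := Nat.lt_floor_add_one s
      have h₃ := Nat.floor_le (add_nonneg hs (hx (Fin.last n)))
      have h₄ := Nat.lt_floor_add_one (s + x (Fin.last n))
      constructor <;> linarith

section ConstrainedBinomialSum

variable {K : ℕ}

noncomputable def binomialWeight (a : Fin K → ℝ) (R : ℕ) (r : Fin K → ℕ) : ℝ :=
  (∏ k, (R.choose (r k) : ℝ)) * exp (∑ k, (r k : ℝ) * a k)

noncomputable def constrainedBinomialSum (a : Fin K → ℝ) (R N : ℕ) : ℝ :=
  ∑ r ∈ (Fintype.piFinset fun _ : Fin K => range (R + 1)).filter (fun r => ∑ k, r k = N),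
    binomialWeight a R r

theorem binomialWeight_nonneg (a : Fin K → ℝ) (R : ℕ) (r : Fin K → ℕ) :
    0 ≤ binomialWeight a R r := by
  unfold binomialWeight; positivity

theorem binomialWeight_pos (a : Fin K → ℝ) {R : ℕ} {r : Fin K → ℕ} (hr : ∀ k, r k ≤ R) :
    0 < binomialWeight a R r :=
  mul_pos (prod_pos fun k _ => Nat.cast_pos.2 (Nat.choose_pos (hr k))) (exp_pos _)

theorem binomialWeight_add_const (a : Fin K → ℝ) (τ : ℝ) (R : ℕ) (r : Fin K → ℕ) :
    binomialWeight (fun k => a k + τ) R r = exp (τ * ∑ k, r k) * binomialWeight a R r := by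
  simp only [binomialWeight, mul_add, sum_add_distrib, ← sum_mul, exp_add]
  push_cast
  rw [mul_comm (∑ k, (r k : ℝ)) τ]
  ring

theorem sum_piFinset_binomialWeight (b : Fin K → ℝ) (R : ℕ) :
    ∑ r ∈ Fintype.piFinset (fun _ : Fin K => range (R + 1)), binomialWeight b R r =
      ∏ k, (1 + exp (b k)) ^ R := by
  simp only [binomialWeight, exp_sum, ← prod_mul_distrib]
  rw [← prod_univ_sum (fun _ : Fin K => range (R + 1))
    (fun k j => (R.choose j : ℝ) * exp (j * b k))]
  refine prod_congr rfl fun k _ => ?_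
  rw [add_comm (1 : ℝ), add_pow]
  refine sum_congr rfl fun j _ => ?_
  rw [← exp_nat_mul, one_pow, mul_comm (j : ℝ)]
  ring

theorem mem_filter_piFinset_range {R N : ℕ} {r : Fin K → ℕ} :
    r ∈ (Fintype.piFinset fun _ : Fin K => range (R + 1)).filter (fun r => ∑ k, r k = N) ↔
      (∀ k, r k ≤ R) ∧ ∑ k, r k = N := by
  simp only [mem_filter, Fintype.mem_piFinset, mem_range, Nat.lt_succ_iff]

theorem binomialWeight_le_constrainedBinomialSum (a : Fin K → ℝ) {R N : ℕ} {r : Fin K → ℕ}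
    (hr : ∀ k, r k ≤ R) (hN : ∑ k, r k = N) :
    binomialWeight a R r ≤ constrainedBinomialSum a R N :=
  single_le_sum (fun r _ => binomialWeight_nonneg a R r) (mem_filter_piFinset_range.2 ⟨hr, hN⟩)

theorem constrainedBinomialSum_le (a : Fin K → ℝ) (τ : ℝ) (R N : ℕ) :
    constrainedBinomialSum a R N ≤ exp (-(τ * N)) * ∏ k, (1 + exp (a k + τ)) ^ R := by
  calc constrainedBinomialSum a R N
      = exp (-(τ * N)) * ∑ r ∈ (Fintype.piFinset fun _ : Fin K => range (R + 1)).filter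
          (fun r => ∑ k, r k = N), binomialWeight (fun k => a k + τ) R r := by
        rw [constrainedBinomialSum, mul_sum]
        refine sum_congr rfl fun r hr => ?_
        rw [binomialWeight_add_const, (mem_filter_piFinset_range.1 hr).2, ← mul_assoc,
          ← exp_add, neg_add_cancel, exp_zero, one_mul]
    _ ≤ exp (-(τ * N)) * ∑ r ∈ Fintype.piFinset (fun _ : Fin K => range (R + 1)),
          binomialWeight (fun k => a k + τ) R r := by
        gcongr
        · exact fun r _ _ => binomialWeight_nonneg _ R r
        · exact filter_subset _ _
    _ = exp (-(τ * N)) * ∏ k, (1 + exp (a k + τ)) ^ R := by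
        rw [sum_piFinset_binomialWeight]

theorem inv_mul_log_constrainedBinomialSum_le (a : Fin K → ℝ) (τ : ℝ) {R : ℕ} (hR : 0 < R)
    (T : ℕ) (hS : 0 < constrainedBinomialSum a R (R * T)) :
    (1 / R) * log (constrainedBinomialSum a R (R * T)) ≤
      -(τ * T) + ∑ k, log (1 + exp (a k + τ)) := by
  have hR' : (0 : ℝ) < R := Nat.cast_pos.2 hR
  have hlog := log_le_log hS (constrainedBinomialSum_le a τ R (R * T))
  rw [log_mul (exp_pos _).ne' (by positivity), log_exp, log_prod (fun k _ => by positivity)] at hlog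
  simp only [log_pow] at hlog
  rw [one_div_mul_eq_div, div_le_iff₀ hR']
  push_cast at hlog
  rw [← mul_sum] at hlog
  linarith

theorem sum_binEntropy_add_mul_sub_le_inv_mul_log_constrainedBinomialSum (a : Fin K → ℝ)
    {R N : ℕ} (hR : 0 < R) {r : Fin K → ℕ} (hr : ∀ k, r k ≤ R) (hN : ∑ k, r k = N) :
    ∑ k, (binEntropy (r k / R) + r k / R * a k) - K * (log (R + 1) / R) ≤
      (1 / R) * log (constrainedBinomialSum a R N) := by
  have hR' : (0 : ℝ) < R := Nat.cast_pos.2 hR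
  have hlog : ∑ k, (log (R.choose (r k)) + r k * a k) ≤ log (constrainedBinomialSum a R N) := by
    refine (le_log_iff_exp_le (binomialWeight_pos a hr |>.trans_le
      (binomialWeight_le_constrainedBinomialSum a hr hN))).2 ?_
    convert binomialWeight_le_constrainedBinomialSum a hr hN using 1
    rw [binomialWeight, sum_add_distrib, exp_add, exp_sum]
    congr 1
    exact prod_congr rfl fun k _ => exp_log (Nat.cast_pos.2 (Nat.choose_pos (hr k)))
  have hterm : ∀ k, R * (binEntropy (r k / R) + r k / R * a k) - log (R + 1) ≤
      log (R.choose (r k)) + r k * a k := fun k => by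
    have := mul_binEntropy_sub_log_le_log_choose (hr k)
    rw [mul_add, ← mul_assoc, mul_div_cancel₀ _ hR'.ne']
    linarith
  have hsum := sum_le_sum fun k (_ : k ∈ univ) => hterm k
  rw [sum_sub_distrib, ← mul_sum, sum_const, card_univ, Fintype.card_fin, nsmul_eq_mul] at hsum
  rw [one_div_mul_eq_div, le_div_iff₀ hR', sub_mul, mul_assoc (K : ℝ), div_mul_cancel₀ _ hR'.ne',
    mul_comm _ (R : ℝ)]
  linarith

end ConstrainedBinomialSum

theorem tendsto_div_natCast_of_abs_sub_lt_one {u : ℕ → ℝ} {x : ℝ}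
    (hu : ∀ R : ℕ, |u R - R * x| < 1) : Tendsto (fun R : ℕ => u R / R) atTop (𝓝 x) := by
  rw [← tendsto_sub_nhds_zero_iff]
  refine squeeze_zero_norm' ?_ tendsto_one_div_atTop_nhds_zero_nat
  filter_upwards [eventually_gt_atTop 0] with R hR
  have hR' : (0 : ℝ) < R := Nat.cast_pos.2 hR
  rw [norm_eq_abs, ← mul_div_cancel_left₀ x hR'.ne', ← sub_div, abs_div, abs_of_pos hR']
  exact div_le_div_of_nonneg_right (hu R).le hR'.le

theorem tendsto_log_natCast_add_one_div_natCast :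
    Tendsto (fun R : ℕ => log (R + 1) / R) atTop (𝓝 0) := by
  have h := (tendsto_pow_log_div_mul_add_atTop 1 (-1) 1 one_ne_zero).comp
    (tendsto_atTop_add_const_right _ 1 tendsto_natCast_atTop_atTop)
  refine h.congr fun R => ?_
  simp

theorem stmt_14_general (K : ℕ) (T : ℕ)
    (a : Fin K → ℝ) (τ : ℝ)
    (hτ : ∑ k : Fin K, Real.exp (a k + τ) / (1 + Real.exp (a k + τ)) = (T : ℝ)) :
    Filter.Tendsto (fun R : ℕ =>
        (1 / (R : ℝ)) * Real.log
          (∑ r ∈ (Fintype.piFinset fun _ : Fin K => Finset.range (R + 1)).filter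
              (fun r => ∑ k, r k = R * T),
            (∏ k : Fin K, (R.choose (r k) : ℝ)) *
              Real.exp (∑ k : Fin K, (r k : ℝ) * a k)))
      Filter.atTop
      (nhds (-(τ * T) + ∑ k : Fin K, Real.log (1 + Real.exp (a k + τ)))) := by
  change Tendsto (fun R : ℕ => 1 / (R : ℝ) * log (constrainedBinomialSum a R (R * T))) _ _
  set p : Fin K → ℝ := fun k => sigmoid (a k + τ)
  have hp : ∑ k, p k = T := by simpa only [exp_div_one_add_exp] using hτ
  choose r hr_sum hr_close using fun R : ℕ =>
    exists_nat_sum_eq_floor_sum_and_abs_sub_lt_one (fun k => R * p k)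
      fun k => mul_nonneg R.cast_nonneg (sigmoid_nonneg _)
  have hsum (R : ℕ) : ∑ k, r R k = R * T := by
    rw [hr_sum, ← mul_sum, hp, ← Nat.cast_mul, Nat.floor_natCast]
  have hle (R : ℕ) (k : Fin K) : r R k ≤ R := by
    have h := (abs_lt.1 (hr_close R k)).2
    have : (R : ℝ) * p k ≤ R := mul_le_of_le_one_right R.cast_nonneg (sigmoid_le_one _)
    exact Nat.lt_succ_iff.1 (by exact_mod_cast (by linarith : (r R k : ℝ) < R + 1))
  have hfreq (k : Fin K) : Tendsto (fun R : ℕ => (r R k : ℝ) / R) atTop (𝓝 (p k)) :=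
    tendsto_div_natCast_of_abs_sub_lt_one fun R => hr_close R k
  have hlower : Tendsto (fun R : ℕ => ∑ k, (binEntropy (r R k / R) + r R k / R * a k) -
      K * (log (R + 1) / R)) atTop (𝓝 (-(τ * T) + ∑ k, log (1 + exp (a k + τ)))) := by
    have hval : ∑ k, (binEntropy (p k) + p k * a k) - K * 0 =
        -(τ * T) + ∑ k, log (1 + exp (a k + τ)) := by
      have hk (k : Fin K) : binEntropy (p k) + p k * a k = log (1 + exp (a k + τ)) - τ * p k := by
        rw [← binEntropy_sigmoid_add_sigmoid_mul]; ring
      rw [sum_congr rfl fun k _ => hk k, sum_sub_distrib, ← mul_sum, hp]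
      ring
    rw [← hval]
    refine (tendsto_finsetSum _ fun k _ => ?_).sub
      (tendsto_log_natCast_add_one_div_natCast.const_mul _)
    exact (binEntropy_continuous.tendsto _).comp (hfreq k) |>.add ((hfreq k).mul_const _)
  refine tendsto_of_tendsto_of_tendsto_of_le_of_le' hlower tendsto_const_nhds ?_ ?_
  all_goals filter_upwards [eventually_gt_atTop 0] with R hR
  · exact sum_binEntropy_add_mul_sub_le_inv_mul_log_constrainedBinomialSum a hR (hle R) (hsum R)
  · exact inv_mul_log_constrainedBinomialSum_le a τ hR T <| (binomialWeight_pos a (hle R)).trans_le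
      (binomialWeight_le_constrainedBinomialSum a (hle R) (hsum R))

theorem stmt_14 (K : ℕ) (hK : 0 < K) (T : ℕ) (hT0 : 0 < T) (hTK : T < K)
    (a : Fin K → ℝ) (τ : ℝ)
    (hτ : ∑ k : Fin K, Real.exp (a k + τ) / (1 + Real.exp (a k + τ)) = (T : ℝ)) :
    Filter.Tendsto (fun R : ℕ =>
        (1 / (R : ℝ)) * Real.log
          (∑ r ∈ (Fintype.piFinset fun _ : Fin K => Finset.range (R + 1)).filter
              (fun r => ∑ k, r k = R * T),
            (∏ k : Fin K, (R.choose (r k) : ℝ)) *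
              Real.exp (∑ k : Fin K, (r k : ℝ) * a k)))
      Filter.atTop
      (nhds (-(τ * T) + ∑ k : Fin K, Real.log (1 + Real.exp (a k + τ)))) :=
  stmt_14_general K T a τ hτ
end

section
/- If a sequence of finite-valued concave functions M_R : ℝ^P → ℝ converges pointwise to a function M which has a unique maximizer β*, and β_R is a maximizer of M_R for each R, then β_R → β* as R → ∞. -/
/-!
Near any point, concave functions are squeezed between a lower bound at the vertices of a
surrounding simplex (minimum principle) and its reflection through the centre, so pointwise
convergence of concave functions gives eventually uniform bounds, hence a common Lipschitz constant,
hence locally uniform convergence. On the sphere of radius `ε` around `β*` the limit stays below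
`M β*` by a fixed gap, so eventually `M_R < M_R β*` there; a maximizer of the concave `M_R` outside
the ball would force, on the segment from `β*` to it, a point of that sphere where `M_R ≥ M_R β*`.
-/

open Filter Metric Set Topology

theorem TotallyBounded.tendstoUniformlyOn_of_lipschitzOnWith {ι α β : Type*}
    [PseudoMetricSpace α] [PseudoMetricSpace β] {l : Filter ι} {F : ι → α → β} {f : α → β}
    {s : Set α} {K : NNReal} (hs : TotallyBounded s) (hF : ∀ᶠ i in l, LipschitzOnWith K (F i) s)
    (hf : LipschitzOnWith K f s) (h : ∀ x ∈ s, Tendsto (F · x) l (𝓝 (f x))) :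
    TendstoUniformlyOn F f l s := by
  rw [Metric.tendstoUniformlyOn_iff]
  intro ε hε
  set δ := ε / (3 * (K + 1))
  have hKδ : K * δ < ε / 3 := by
    rw [mul_div_assoc', div_lt_div_iff₀ (by positivity) (by norm_num)]
    nlinarith [K.coe_nonneg]
  obtain ⟨t, hts, ht, hcover⟩ := finite_approx_of_totallyBounded hs δ (by positivity)
  have hnet : ∀ᶠ i in l, ∀ p ∈ t, dist (F i p) (f p) < ε / 3 := by
    rw [ht.eventually_all]
    exact fun p hp => Metric.tendsto_nhds.1 (h p (hts hp)) _ (by positivity)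
  filter_upwards [hF, hnet] with i hFi hi x hx
  obtain ⟨p, hp, hxp⟩ : ∃ p ∈ t, dist x p < δ := by simpa using hcover hx
  calc dist (f x) (F i x) ≤ dist (f x) (f p) + dist (f p) (F i p) + dist (F i p) (F i x) :=
        dist_triangle4 ..
    _ ≤ K * dist x p + dist (F i p) (f p) + K * dist p x := by
        rw [dist_comm (f p)]
        gcongr
        · exact hf.dist_le_mul x hx p (hts hp)
        · exact hFi.dist_le_mul p (hts hp) x hx
    _ < ε := by
        rw [dist_comm p]
        have hKx : K * dist x p ≤ K * δ := by gcongr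
        linarith [hi p hp]

theorem concaveOn_of_tendsto {ι E : Type*} [AddCommGroup E] [Module ℝ E] {l : Filter ι}
    [l.NeBot] {F : ι → E → ℝ} {f : E → ℝ} {s : Set E} (hF : ∀ i, ConcaveOn ℝ s (F i))
    (h : ∀ x ∈ s, Tendsto (F · x) l (𝓝 (f x))) : ConcaveOn ℝ s f := by
  obtain ⟨i⟩ := l.nonempty_of_neBot
  refine ⟨(hF i).1, fun x hx y hy a b ha hb hab => ?_⟩
  exact le_of_tendsto_of_tendsto (((h x hx).const_mul a).add ((h y hy).const_mul b))
    (h _ ((hF i).1 hx hy ha hb hab)) (.of_forall fun i => (hF i).2 hx hy ha hb hab)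

section Concave

variable {E : Type*} [NormedAddCommGroup E] [NormedSpace ℝ E] {f : E → ℝ} {t : Set E}
  {x₀ : E} {r m c : ℝ}

theorem ConcaveOn.abs_le_of_ball_subset_convexHull (hf : ConcaveOn ℝ univ f)
    (ht : ball x₀ r ⊆ convexHull ℝ t) (hm : ∀ v ∈ t, m ≤ f v) (hc : f x₀ ≤ c) {x : E}
    (hx : x ∈ ball x₀ r) : |f x| ≤ max |m| |2 * c - m| := by
  have hlower : ∀ y ∈ ball x₀ r, m ≤ f y := fun y hy => by
    obtain ⟨v, hv, hvy⟩ := hf.exists_le_of_mem_convexHull (subset_univ t) (ht hy)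
    exact (hm v hv).trans hvy
  have hreflect : x₀ + (x₀ - x) ∈ ball x₀ r := by
    simpa [dist_eq_norm, norm_sub_rev] using hx
  have hmid := hf.2 (mem_univ x) (mem_univ (x₀ + (x₀ - x))) one_half_pos.le one_half_pos.le
    (add_halves 1)
  rw [show (1 / 2 : ℝ) • x + (1 / 2 : ℝ) • (x₀ + (x₀ - x)) = x₀ by module, smul_eq_mul,
    smul_eq_mul] at hmid
  exact abs_le_max_abs_abs (hlower x hx) (by linarith [hlower _ hreflect])

theorem ConcaveOn.lipschitzOnWith_of_ball_subset_convexHull (hf : ConcaveOn ℝ univ f)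
    (ht : ball x₀ r ⊆ convexHull ℝ t) (hm : ∀ v ∈ t, m ≤ f v) (hc : f x₀ ≤ c) {ε : ℝ}
    (hε : 0 < ε) :
    LipschitzOnWith (2 * max |m| |2 * c - m| / ε).toNNReal f (ball x₀ (r - ε)) :=
  (hf.subset (subset_univ _) (convex_ball x₀ r)).lipschitzOnWith_of_abs_le hε fun _ ha =>
    hf.abs_le_of_ball_subset_convexHull ht hm hc ha

theorem ConcaveOn.mem_ball_of_forall_mem_sphere_lt (hf : ConcaveOn ℝ univ f) {z : E}
    (hr : 0 ≤ r) (hS : ∀ x ∈ sphere x₀ r, f x < f x₀) (hz : f x₀ ≤ f z) : z ∈ ball x₀ r := by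
  by_contra hzr
  rw [mem_ball, not_lt, dist_comm] at hzr
  set x := AffineMap.lineMap x₀ z (r / dist x₀ z)
  have hx : x ∈ sphere x₀ r := by
    rw [mem_sphere, dist_lineMap_left, Real.norm_eq_abs, abs_of_nonneg (by positivity)]
    rcases (dist_nonneg : 0 ≤ dist x₀ z).eq_or_lt with hd | hd
    · rw [← hd] at hzr ⊢
      simp only [div_zero, mul_zero]
      linarith
    · exact div_mul_cancel₀ r hd.ne'
  have hseg : x ∈ segment ℝ x₀ z :=
    lineMap_mem_segment ℝ x₀ z ⟨by positivity, div_le_one_of_le₀ hzr dist_nonneg⟩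
  have hmin := hf.min_le_of_mem_segment (mem_univ x₀) (mem_univ z) hseg
  rw [min_eq_left hz] at hmin
  exact (hS x hx).not_ge hmin

variable [FiniteDimensional ℝ E]

theorem tendstoLocallyUniformly_of_concaveOn_of_tendsto {ι : Type*} {l : Filter ι} [l.NeBot]
    {F : ι → E → ℝ} (hF : ∀ i, ConcaveOn ℝ univ (F i)) (h : ∀ x, Tendsto (F · x) l (𝓝 (f x))) :
    TendstoLocallyUniformly F f l := by
  have hf : ConcaveOn ℝ univ f := concaveOn_of_tendsto hF fun x _ => h x
  refine tendstoLocallyUniformly_of_forall_exists_nhds fun x₀ => ?_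
  obtain ⟨b, hx₀b, -⟩ := exists_mem_interior_convexHull_affineBasis (univ_mem (f := 𝓝 x₀))
  obtain ⟨r, hr, hball⟩ := Metric.isOpen_iff.1 isOpen_interior x₀ hx₀b
  replace hball := hball.trans interior_subset
  obtain ⟨m, hm⟩ := ((finite_range b).image f).bddBelow
  have hfm : ∀ v ∈ range b, m - 1 < f v := fun v hv => by
    linarith [hm (mem_image_of_mem f hv)]
  have hFm : ∀ᶠ i in l, ∀ v ∈ range b, m - 1 ≤ F i v := by
    simp only [forall_mem_range]
    rw [eventually_all]
    exact fun j => (h (b j)).eventually (eventually_ge_nhds (hfm _ (mem_range_self j)))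
  have hFc : ∀ᶠ i in l, F i x₀ ≤ f x₀ + 1 := (h x₀).eventually (eventually_le_nhds (lt_add_one _))
  refine ⟨ball x₀ (r / 2), ball_mem_nhds x₀ (half_pos hr), ?_⟩
  have hfK := hf.lipschitzOnWith_of_ball_subset_convexHull hball (fun v hv => (hfm v hv).le)
    (lt_add_one _).le (half_pos hr)
  rw [sub_half] at hfK
  refine ((isCompact_closedBall x₀ (r / 2)).totallyBounded.subset ball_subset_closedBall
    ).tendstoUniformlyOn_of_lipschitzOnWith ?_ hfK fun x _ => h x
  filter_upwards [hFm, hFc] with i him hic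
  have hFK := (hF i).lipschitzOnWith_of_ball_subset_convexHull hball him hic (half_pos hr)
  rwa [sub_half] at hFK

end Concave

theorem stmt_15_general (P : ℕ)
    (M : ℕ → (EuclideanSpace ℝ (Fin P)) → ℝ)
    (hconc : ∀ R, ConcaveOn ℝ Set.univ (M R))
    (Mlim : (EuclideanSpace ℝ (Fin P)) → ℝ)
    (hpt : ∀ β, Filter.Tendsto (fun R => M R β) Filter.atTop (nhds (Mlim β)))
    (βstar : EuclideanSpace ℝ (Fin P))
    (hmax : ∀ β, Mlim β ≤ Mlim βstar)
    (huniq : ∀ β, (∀ γ, Mlim γ ≤ Mlim β) → β = βstar)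
    (βR : ℕ → EuclideanSpace ℝ (Fin P))
    (hβR : ∀ R β, M R β ≤ M R (βR R)) :
    Filter.Tendsto βR Filter.atTop (nhds βstar) := by
  have hunif := tendstoLocallyUniformly_of_concaveOn_of_tendsto hconc hpt
  have hcont : Continuous Mlim :=
    hunif.continuous (.of_forall fun R => continuousOn_univ.1 ((hconc R).continuousOn isOpen_univ))
  refine Metric.tendsto_nhds.2 fun ε hε => ?_
  have hlt : ∀ x ∈ sphere βstar ε, 0 < Mlim βstar - Mlim x := fun x hx =>
    sub_pos.2 <| (hmax x).lt_of_ne fun h => ne_of_mem_sphere hx hε.ne' (huniq x (h ▸ hmax))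
  obtain ⟨δ, hδ, hgap⟩ := (isCompact_sphere βstar ε).exists_forall_le'
    (continuousOn_const.sub hcont.continuousOn) hlt
  have hclose := Metric.tendstoUniformlyOn_iff.1
    (tendstoLocallyUniformly_iff_forall_isCompact.1 hunif _ (isCompact_closedBall βstar ε))
    (δ / 2) (half_pos hδ)
  filter_upwards [hclose] with R hR
  refine (hconc R).mem_ball_of_forall_mem_sphere_lt hε.le (fun x hx => ?_) (hβR R βstar)
  have hgapx : δ ≤ Mlim βstar - Mlim x := hgap x hx
  have hRx := hR x (sphere_subset_closedBall hx)
  have hRstar := hR βstar (mem_closedBall_self hε.le)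
  rw [Real.dist_eq, abs_lt] at hRx hRstar
  linarith

theorem stmt_15 (P : ℕ) (hP : 0 < P)
    (M : ℕ → (EuclideanSpace ℝ (Fin P)) → ℝ)
    (hconc : ∀ R, ConcaveOn ℝ Set.univ (M R))
    (Mlim : (EuclideanSpace ℝ (Fin P)) → ℝ)
    (hpt : ∀ β, Filter.Tendsto (fun R => M R β) Filter.atTop (nhds (Mlim β)))
    (βstar : EuclideanSpace ℝ (Fin P))
    (hmax : ∀ β, Mlim β ≤ Mlim βstar)
    (huniq : ∀ β, (∀ γ, Mlim γ ≤ Mlim β) → β = βstar)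
    (βR : ℕ → EuclideanSpace ℝ (Fin P))
    (hβR : ∀ R β, M R β ≤ M R (βR R)) :
    Filter.Tendsto βR Filter.atTop (nhds βstar) :=
  stmt_15_general P M hconc Mlim hpt βstar hmax huniq βR hβR
end

section
/- For a single cluster of size K = 2 (matched pair) with covariate dimension P = 1, covariates X_1 = 1, X_2 = 0, and outcome sum T = 1, the conditional log-likelihood term log(e^{β·1} + e^{β·0}) satisfies: the conditional score equation ∑_k Y_k X_k = e^{β}/(1 + e^{β}) together with the ordinary score equation imply that the MLE and CMLE satisfy β̂^o = 2 β̂^c. -/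
/-! Both score equations are statements about the logistic function `σ x = eˣ / (1 + eˣ)`.
Since `1 - σ x = σ (-x)` and `σ` is injective, the profile equation
`σ (β̂ᵒ + b) + σ b = 1` forces `β̂ᵒ + b = -b`, and the score equation gives `β̂ᵒ + b = β̂ᶜ`;
eliminating `b` yields `β̂ᵒ = 2 β̂ᶜ`. -/

namespace Real

lemma exp_div_one_add_exp_s17 (x : ℝ) : exp x / (1 + exp x) = sigmoid x := by
  rw [sigmoid_def, exp_neg]
  field_simp
  ring

lemma sigmoid_add_sigmoid_eq_one_iff {x y : ℝ} : sigmoid x + sigmoid y = 1 ↔ x = -y := by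
  rw [← eq_sub_iff_add_eq, ← sigmoid_neg, sigmoid_inj]

end Real

/-- Matched-pair design (K = 2, X₁ = 1, X₂ = 0, outcome sum T = 1):
if the cluster intercept `b` is profiled out via the ordinary score equation,
and the ordinary and conditional score equations agree, then β̂ᵒ = 2β̂ᶜ. -/
theorem stmt_17 (βo βc b : ℝ)
    (hprofile : Real.exp (βo + b) / (1 + Real.exp (βo + b)) +
        Real.exp b / (1 + Real.exp b) = 1)
    (hscore : Real.exp (βo + b) / (1 + Real.exp (βo + b)) =
        Real.exp βc / (1 + Real.exp βc)) :
    βo = 2 * βc := by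
  simp only [Real.exp_div_one_add_exp_s17] at hprofile hscore
  have hb : βo + b = -b := Real.sigmoid_add_sigmoid_eq_one_iff.mp hprofile
  have hc : βo + b = βc := Real.sigmoid_inj.mp hscore
  linarith
end
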